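/- arXiv:1909.00214 — 3 statements merged into one kernel-verified Lean document; each statement's English description precedes it below -/
import Mathlib

section
/- Let 1 ≤ n ≤ N. Every graph H on N vertices containing no copy of P_{n+1} admits a partition of its edge set into at most ⌈N/n⌉ classes F_1, …, F_k such that for each i there exist disjoint vertex sets S_i, T_i with |S_i| ≤ n and |T_i| ≤ n, and every edge in F_i has both endpoints in S_i ∪ T_i and at least one endpoint in S_i. -/
/-- `H` contains no path on `n+1` vertices (i.e. no path with `n` edges). -/
def PathFree (n : ℕ) {V : Type*} (H : SimpleGraph V) : Prop :=
  ∀ (u v : V) (w : H.Walk u v), w.IsPath → w.length < n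

lemma exists_walk_of_chain {V : Type*} (H : SimpleGraph V) :
    ∀ (l : List V) (a : V), List.Chain H.Adj a l →
      ∃ (b : V) (w : H.Walk a b), w.support = a :: l := by
  intro l
  induction l with
  | nil => intro a _; exact ⟨a, .nil, rfl⟩
  | cons c l' ih =>
      intro a h
      replace h := List.isChain_cons_cons.mp h
      obtain ⟨b, w, hw⟩ := ih c h.2
      exact ⟨b, .cons h.1 w, by simp [hw]⟩

lemma length_le_of_path_list {V : Type*} {n : ℕ} (H : SimpleGraph V) (hH : PathFree n H)
    (l : List V) (hc : l.Chain' H.Adj) (hd : l.Nodup) : l.length ≤ n := by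
  cases l with
  | nil => simp
  | cons a l' =>
      obtain ⟨b, w, hw⟩ := exists_walk_of_chain H l' a hc
      have hp : w.IsPath := by
        rw [SimpleGraph.Walk.isPath_def, hw]; exact hd
      have h1 := hH a b w hp
      have hlen : w.support.length = w.length + 1 := SimpleGraph.Walk.length_support w
      rw [hw] at hlen
      simp only [List.length_cons] at hlen ⊢
      omega

/-- The core DFS argument: run a depth-first search, whose stack is always a path in `H`
(hence short), until exactly `min n |R|` vertices remain unvisited; these form `S`, and the
stack at that moment forms `T`, separating `S` from the visited vertices. -/
lemma dfs_aux {N : ℕ} (n : ℕ) (H : SimpleGraph (Fin N)) (hH : PathFree n H)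
    (R : Finset (Fin N)) :
    ∀ (M : ℕ) (Vis : Finset (Fin N)) (stack : List (Fin N)),
      2 * (R \ Vis).card + stack.length ≤ M →
      Vis ⊆ R →
      (∀ x ∈ stack, x ∈ Vis) →
      stack.Chain' H.Adj →
      stack.Nodup →
      (∀ u ∈ Vis, u ∉ stack → ∀ v, H.Adj u v → v ∈ R → v ∈ Vis) →
      min n R.card ≤ (R \ Vis).card →
      ∃ S T : Finset (Fin N), S ⊆ R ∧ Disjoint S T ∧
        S.card = min n R.card ∧ T.card ≤ n ∧
        ∀ u v : Fin N, H.Adj u v → u ∈ R → v ∈ R → u ∈ S → v ∈ S ∪ T := by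
  intro M
  induction M with
  | zero =>
      intro Vis stack hM hVR hsV hchain hnd hinv hmin
      have hc0 : (R \ Vis).card = 0 := by omega
      refine ⟨R \ Vis, ∅, Finset.sdiff_subset, Finset.disjoint_empty_right _, ?_, by simp, ?_⟩
      · omega
      · intro u v _ _ _ huS
        have := Finset.card_eq_zero.mp hc0
        rw [this] at huS
        simp at huS
  | succ M ih =>
      intro Vis stack hM hVR hsV hchain hnd hinv hmin
      by_cases hstop : (R \ Vis).card = min n R.card
      · -- harvest
        refine ⟨R \ Vis, stack.toFinset, Finset.sdiff_subset, ?_, hstop, ?_, ?_⟩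
        · rw [Finset.disjoint_left]
          intro x hx hxT
          rw [List.mem_toFinset] at hxT
          exact (Finset.mem_sdiff.mp hx).2 (hsV x hxT)
        · calc stack.toFinset.card ≤ stack.length := stack.toFinset_card_le
            _ ≤ n := length_le_of_path_list H hH stack hchain hnd
        · intro u v hadj huR hvR huS
          by_cases hvV : v ∈ Vis
          · by_cases hvs : v ∈ stack
            · exact Finset.mem_union_right _ (List.mem_toFinset.mpr hvs)
            · exfalso
              have := hinv v hvV hvs u hadj.symm huR
              exact (Finset.mem_sdiff.mp huS).2 this
          · exact Finset.mem_union_left _ (Finset.mem_sdiff.mpr ⟨hvR, hvV⟩)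
      · have hgt : min n R.card < (R \ Vis).card := lt_of_le_of_ne hmin (Ne.symm hstop)
        have hpos : 0 < (R \ Vis).card := Nat.lt_of_le_of_lt (Nat.zero_le _) hgt
        cases stack with
        | nil =>
            -- stack empty: start exploring a new component from any unvisited vertex
            obtain ⟨z, hz⟩ := Finset.card_pos.mp hpos
            rw [Finset.mem_sdiff] at hz
            have hcard : (R \ insert z Vis).card = (R \ Vis).card - 1 := by
              rw [Finset.sdiff_insert, Finset.card_erase_of_mem
                (Finset.mem_sdiff.mpr hz)]
            apply ih (insert z Vis) [z]
            · simp only [List.length_cons, List.length_nil]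
              omega
            · exact Finset.insert_subset hz.1 hVR
            · intro x hx
              simp only [List.mem_singleton] at hx
              simp [hx]
            · exact List.isChain_singleton z
            · simp
            · intro u hu hus v hadj hvR
              rcases Finset.mem_insert.mp hu with rfl | hu'
              · simp at hus
              · exact Finset.mem_insert_of_mem (hinv u hu' (by simp) v hadj hvR)
            · omega
        | cons w rest =>
            by_cases hpush : ∃ v, H.Adj w v ∧ v ∈ R ∧ v ∉ Vis
            · -- push an unvisited neighbour of the top of the stack
              obtain ⟨v, hvw, hvR, hvV⟩ := hpush
              have hvRV : v ∈ R \ Vis := Finset.mem_sdiff.mpr ⟨hvR, hvV⟩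
              have hcard : (R \ insert v Vis).card = (R \ Vis).card - 1 := by
                rw [Finset.sdiff_insert, Finset.card_erase_of_mem hvRV]
              apply ih (insert v Vis) (v :: w :: rest)
              · simp only [List.length_cons] at hM ⊢
                omega
              · exact Finset.insert_subset hvR hVR
              · intro x hx
                rcases List.mem_cons.mp hx with rfl | hx'
                · exact Finset.mem_insert_self _ _
                · exact Finset.mem_insert_of_mem (hsV x hx')
              · exact List.isChain_cons_cons.mpr ⟨hvw.symm, hchain⟩
              · refine List.nodup_cons.mpr ⟨?_, hnd⟩
                intro hvs
                exact hvV (hsV v hvs)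
              · intro u hu hus x hadj hxR
                rcases Finset.mem_insert.mp hu with rfl | hu'
                · exact absurd (List.mem_cons_self) hus
                · refine Finset.mem_insert_of_mem (hinv u hu' ?_ x hadj hxR)
                  intro hmem
                  exact hus (List.mem_cons_of_mem _ hmem)
              · omega
            · -- pop: the top of the stack has no unvisited neighbour in `R`
              apply ih Vis rest
              · simp only [List.length_cons] at hM
                omega
              · exact hVR
              · intro x hx; exact hsV x (List.mem_cons_of_mem _ hx)
              · exact (List.isChain_cons.mp hchain).2
              · exact (List.nodup_cons.mp hnd).2
              · intro u hu hus v hadj hvR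
                by_cases huw : u = w
                · subst huw
                  by_contra hvV
                  exact hpush ⟨v, hadj, hvR, hvV⟩
                · refine hinv u hu ?_ v hadj hvR
                  intro hmem
                  rcases List.mem_cons.mp hmem with rfl | h'
                  · exact huw rfl
                  · exact hus h'
              · exact hmin

/-- Key step: in a `P_{n+1}`-free graph, one can find `S ⊆ R` with exactly `min n |R|`
vertices and a disjoint set `T` of at most `n` vertices so that all edges inside `R`
leaving `S` land in `T`. -/
lemma key_step {N : ℕ} (n : ℕ) (H : SimpleGraph (Fin N)) (hH : PathFree n H)
    (R : Finset (Fin N)) :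
    ∃ S T : Finset (Fin N), S ⊆ R ∧ Disjoint S T ∧
      S.card = min n R.card ∧ T.card ≤ n ∧
      ∀ u v : Fin N, H.Adj u v → u ∈ R → v ∈ R → u ∈ S → v ∈ S ∪ T := by
  apply dfs_aux n H hH R (2 * R.card) ∅ []
  · simp
  · simp
  · simp
  · exact List.isChain_nil
  · simp
  · simp
  · simp only [Finset.sdiff_empty]
    exact min_le_right _ _

lemma arith_step (n r : ℕ) (hn : 1 ≤ n) (hr : 1 ≤ r) :
    (r - min n r + (n - 1)) / n + 1 ≤ (r + (n - 1)) / n := by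
  by_cases h : r ≤ n
  · have h1 : min n r = r := min_eq_right h
    rw [h1]
    have h2 : r - r + (n - 1) = n - 1 := by omega
    rw [h2, Nat.div_eq_of_lt (by omega)]
    have h3 : n ≤ r + (n - 1) := by omega
    have := (Nat.one_le_div_iff (by omega : 0 < n)).mpr h3
    omega
  · have h1 : min n r = n := min_eq_left (by omega)
    rw [h1]
    have h2 : r - n + (n - 1) = r - 1 := by omega
    have h3 : r + (n - 1) = (r - 1) + n := by omega
    rw [h2, h3, Nat.add_div_right _ (by omega : 0 < n)]

/-- Main decomposition lemma, by induction on the number of remaining vertices `R`. -/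
lemma main_lemma {N : ℕ} (n : ℕ) (hn : 1 ≤ n) (H : SimpleGraph (Fin N)) (hH : PathFree n H) :
    ∀ (c : ℕ) (R : Finset (Fin N)), R.card ≤ c →
    ∃ (k : ℕ) (F : Fin k → Set (Sym2 (Fin N))),
      k ≤ (R.card + (n - 1)) / n ∧
      (⋃ i, F i) = {e | e ∈ H.edgeSet ∧ ∀ v ∈ e, v ∈ R} ∧
      (Pairwise fun i j => Disjoint (F i) (F j)) ∧
      ∀ i : Fin k, ∃ S T : Finset (Fin N),
        Disjoint S T ∧ S.card ≤ n ∧ T.card ≤ n ∧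
        ∀ e ∈ F i, (∀ v ∈ e, v ∈ S ∪ T) ∧ (∃ v ∈ e, v ∈ S) := by
  intro c
  induction c with
  | zero =>
      intro R hR
      have hR0 : R = ∅ := Finset.card_eq_zero.mp (Nat.le_zero.mp hR)
      subst hR0
      refine ⟨0, fun i => i.elim0, Nat.zero_le _, ?_, ?_, fun i => i.elim0⟩
      · ext e
        simp only [Set.mem_iUnion, Set.mem_setOf_eq]
        constructor
        · rintro ⟨i, _⟩; exact i.elim0
        · rintro ⟨he, hv⟩
          induction e using Sym2.ind with
          | _ a b =>
              exact absurd (hv a (Sym2.mem_mk_left a b)) (Finset.notMem_empty a)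
      · intro i; exact i.elim0
  | succ c ih =>
      intro R hR
      by_cases h0 : R.card = 0
      · have hR0 : R = ∅ := Finset.card_eq_zero.mp h0
        subst hR0
        refine ⟨0, fun i => i.elim0, Nat.zero_le _, ?_, ?_, fun i => i.elim0⟩
        · ext e
          simp only [Set.mem_iUnion, Set.mem_setOf_eq]
          constructor
          · rintro ⟨i, _⟩; exact i.elim0
          · rintro ⟨he, hv⟩
            induction e using Sym2.ind with
            | _ a b =>
                exact absurd (hv a (Sym2.mem_mk_left a b)) (Finset.notMem_empty a)
        · intro i; exact i.elim0
      · obtain ⟨S, T, hSR, hST, hScard, hTcard, hprop⟩ := key_step n H hH R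
        set R' := R \ S with hR'def
        have hm1 : 1 ≤ min n R.card := by
          have : 1 ≤ R.card := by omega
          exact le_min hn this
        have hR'card : R'.card = R.card - min n R.card := by
          rw [hR'def, Finset.card_sdiff_of_subset hSR, hScard]
        have hR'le : R'.card ≤ c := by omega
        obtain ⟨k', F', hk', hU', hpw', hcl'⟩ := ih R' hR'le
        set F0 : Set (Sym2 (Fin N)) :=
          {e | e ∈ H.edgeSet ∧ (∀ v ∈ e, v ∈ R) ∧ ∃ v ∈ e, v ∈ S} with hF0def
        have hsub' : ∀ (j : Fin k') (e : Sym2 (Fin N)),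
            e ∈ F' j → e ∈ H.edgeSet ∧ ∀ v ∈ e, v ∈ R' := by
          intro j e he
          have : e ∈ ⋃ i, F' i := Set.mem_iUnion.mpr ⟨j, he⟩
          rw [hU'] at this
          exact this
        refine ⟨k' + 1, Fin.cons F0 F', ?_, ?_, ?_, ?_⟩
        · have := arith_step n R.card hn (by omega)
          rw [hR'card] at hk'
          omega
        · ext e
          simp only [Set.mem_iUnion, Set.mem_setOf_eq]
          constructor
          · rintro ⟨i, hi⟩
            rcases Fin.eq_zero_or_eq_succ i with rfl | ⟨j, rfl⟩
            · rw [Fin.cons_zero] at hi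
              exact ⟨hi.1, hi.2.1⟩
            · rw [Fin.cons_succ] at hi
              obtain ⟨he, hv⟩ := hsub' j e hi
              exact ⟨he, fun v hv' => (Finset.mem_sdiff.mp (hv v hv')).1⟩
          · rintro ⟨he, hv⟩
            by_cases hS : ∃ v ∈ e, v ∈ S
            · exact ⟨0, by rw [Fin.cons_zero]; exact ⟨he, hv, hS⟩⟩
            · have : e ∈ ⋃ i, F' i := by
                rw [hU']
                refine ⟨he, fun v hv' => Finset.mem_sdiff.mpr ⟨hv v hv', ?_⟩⟩
                intro hvS
                exact hS ⟨v, hv', hvS⟩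
              obtain ⟨j, hj⟩ := Set.mem_iUnion.mp this
              exact ⟨j.succ, by rwa [Fin.cons_succ]⟩
        · have hd0 : ∀ j : Fin k', Disjoint F0 (F' j) := by
            intro j
            rw [Set.disjoint_left]
            rintro e ⟨he, hvR, v, hv, hvS⟩ he'
            have := (hsub' j e he').2 v hv
            exact (Finset.mem_sdiff.mp this).2 hvS
          intro i j hij
          rcases Fin.eq_zero_or_eq_succ i with rfl | ⟨i', rfl⟩ <;>
            rcases Fin.eq_zero_or_eq_succ j with rfl | ⟨j', rfl⟩
          · exact absurd rfl hij
          · rw [Fin.cons_zero, Fin.cons_succ]; exact hd0 j'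
          · rw [Fin.cons_zero, Fin.cons_succ]; exact (hd0 i').symm
          · rw [Fin.cons_succ, Fin.cons_succ]
            exact hpw' (fun h => hij (by rw [h]))
        · intro i
          rcases Fin.eq_zero_or_eq_succ i with rfl | ⟨i', rfl⟩
          · refine ⟨S, T, hST, hScard ▸ min_le_left _ _, hTcard, ?_⟩
            intro e
            rw [Fin.cons_zero]
            induction e using Sym2.ind with
            | _ a b =>
                rintro ⟨he, hvR, u, hu, huS⟩
                have hadj : H.Adj a b := he
                have haR : a ∈ R := hvR a (Sym2.mem_mk_left a b)
                have hbR : b ∈ R := hvR b (Sym2.mem_mk_right a b)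
                refine ⟨?_, u, hu, huS⟩
                intro v hv
                rcases Sym2.mem_iff.mp hu with rfl | rfl <;>
                  rcases Sym2.mem_iff.mp hv with rfl | rfl
                · exact Finset.mem_union_left _ huS
                · exact hprop u v hadj haR hbR huS
                · exact hprop u v hadj.symm hbR haR huS
                · exact Finset.mem_union_left _ huS
          · obtain ⟨S', T', h1, h2, h3, h4⟩ := hcl' i'
            refine ⟨S', T', h1, h2, h3, ?_⟩
            intro e he
            rw [Fin.cons_succ] at he
            exact h4 e he

/-- Every `P_{n+1}`-free graph `H` on `N` vertices (with `1 ≤ n ≤ N`) admits a decomposition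
of its edge set into at most `⌈N/n⌉` classes `F i`, where for each `i` there are disjoint
vertex sets `S i`, `T i` of size at most `n` such that every edge of `F i` has both endpoints
in `S i ∪ T i` and at least one endpoint in `S i`. -/
theorem stmt6 (N n : ℕ) (hn : 1 ≤ n) (hnN : n ≤ N)
    (H : SimpleGraph (Fin N)) (hH : PathFree n H) :
    ∃ (k : ℕ) (F : Fin k → Set (Sym2 (Fin N))),
      k ≤ ⌈(N : ℝ) / (n : ℝ)⌉₊ ∧
      (⋃ i, F i) = H.edgeSet ∧
      (Pairwise fun i j => Disjoint (F i) (F j)) ∧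
      ∀ i : Fin k, ∃ S T : Finset (Fin N),
        Disjoint S T ∧ S.card ≤ n ∧ T.card ≤ n ∧
        ∀ e ∈ F i, (∀ v ∈ e, v ∈ S ∪ T) ∧ (∃ v ∈ e, v ∈ S) := by
  obtain ⟨k, F, hk, hU, hpw, hcl⟩ :=
    main_lemma n hn H hH (Finset.univ.card) Finset.univ le_rfl
  have hcard : (Finset.univ : Finset (Fin N)).card = N := by simp
  refine ⟨k, F, ?_, ?_, hpw, hcl⟩
  · -- k ≤ (N + (n-1))/n ≤ ⌈N/n⌉₊
    rw [hcard] at hk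
    have hnpos : (0 : ℝ) < n := by exact_mod_cast hn
    have h1 : (N : ℝ) / n ≤ (⌈(N : ℝ) / n⌉₊ : ℝ) := Nat.le_ceil _
    have h2 : (N : ℝ) ≤ (⌈(N : ℝ) / n⌉₊ : ℝ) * n := by
      rwa [div_le_iff₀ hnpos] at h1
    have h3 : N ≤ ⌈(N : ℝ) / n⌉₊ * n := by exact_mod_cast h2
    have h4 : (N + (n - 1)) / n ≤ ⌈(N : ℝ) / n⌉₊ := by
      rw [Nat.div_le_iff_le_mul_add_pred (by omega : 0 < n)]
      have : n * ⌈(N : ℝ) / n⌉₊ = ⌈(N : ℝ) / n⌉₊ * n := Nat.mul_comm _ _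
      omega
    omega
  · rw [hU]
    ext e
    simp only [Set.mem_setOf_eq, Finset.mem_univ, implies_true, and_true]
end

section
/- Suppose N ≥ 3n and np ≥ (log(N/n))/6. Then the probability that there exist two disjoint sets S, T ⊆ {1,…,N} with |S| = |T| = n such that the number of edges of G(N,p) with both endpoints in S ∪ T and at least one endpoint in S exceeds 18·n²·p is at most exp(−0.19·n). In particular, a.a.s. (as n → ∞) every such pair S, T spans at most 18·n²·p edges with at least one endpoint in S. -/
open Filter

open Finset

variable {α : Type*} [DecidableEq α]

lemma sum_weight_powerset (p : ℝ) (s : Finset α) :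
    ∑ F ∈ s.powerset, p ^ F.card * (1 - p) ^ (s.card - F.card) = 1 := by
  induction s using Finset.induction_on with
  | empty => simp
  | insert a s ha ih =>
    rw [Finset.powerset_insert, Finset.sum_union, Finset.sum_image]
    · have h1 : ∀ F ∈ s.powerset, p ^ (insert a F).card *
          (1 - p) ^ ((insert a s).card - (insert a F).card)
          = p * (p ^ F.card * (1 - p) ^ (s.card - F.card)) := by
        intro F hF
        rw [Finset.mem_powerset] at hF
        rw [Finset.card_insert_of_notMem (fun h => ha (hF h)),
          Finset.card_insert_of_notMem ha, Nat.succ_sub_succ, pow_succ]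
        ring
      have h2 : ∀ F ∈ s.powerset, p ^ F.card * (1 - p) ^ ((insert a s).card - F.card)
          = (1 - p) * (p ^ F.card * (1 - p) ^ (s.card - F.card)) := by
        intro F hF
        rw [Finset.mem_powerset] at hF
        rw [Finset.card_insert_of_notMem ha,
          Nat.succ_sub (Finset.card_le_card hF), pow_succ]
        ring
      rw [Finset.sum_congr rfl h1, Finset.sum_congr rfl h2, ← Finset.mul_sum,
        ← Finset.mul_sum, ih]
      ring
    · intro F hF G hG hFG
      rw [Finset.mem_coe, Finset.mem_powerset] at hF hG
      have haF : a ∉ F := fun h => ha (hF h)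
      have haG : a ∉ G := fun h => ha (hG h)
      rw [← Finset.erase_insert haF, ← Finset.erase_insert haG, hFG]
    · rw [Finset.disjoint_left]
      intro F hF hF2
      rw [Finset.mem_powerset] at hF
      obtain ⟨G, hG, rfl⟩ := Finset.mem_image.1 hF2
      exact ha (hF (Finset.mem_insert_self a G))

lemma sum_weight_powerset_filter (p : ℝ) {s F₀ : Finset α} (h : F₀ ⊆ s) :
    ∑ F ∈ s.powerset.filter (fun F => F₀ ⊆ F),
      p ^ F.card * (1 - p) ^ (s.card - F.card) = p ^ F₀.card := by
  have key : ∀ F ∈ (s \ F₀).powerset,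
      p ^ (F ∪ F₀).card * (1 - p) ^ (s.card - (F ∪ F₀).card)
      = p ^ F₀.card * (p ^ F.card * (1 - p) ^ ((s \ F₀).card - F.card)) := by
    intro F hF
    rw [Finset.mem_powerset] at hF
    have hdisj : Disjoint F F₀ := Finset.disjoint_of_subset_left hF Finset.sdiff_disjoint
    have hcard : (F ∪ F₀).card = F.card + F₀.card := Finset.card_union_of_disjoint hdisj
    have h1 : (s \ F₀).card = s.card - F₀.card := Finset.card_sdiff_of_subset h
    have h2 : F.card ≤ (s \ F₀).card := Finset.card_le_card hF
    have h3 : F₀.card ≤ s.card := Finset.card_le_card h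
    have h4 : s.card - (F.card + F₀.card) = (s \ F₀).card - F.card := by omega
    rw [hcard, h4, pow_add]
    ring
  rw [Finset.sum_nbij' (i := fun F => F \ F₀) (j := fun F => F ∪ F₀)
    (t := (s \ F₀).powerset)
    (g := fun F => p ^ (F ∪ F₀).card * (1 - p) ^ (s.card - (F ∪ F₀).card))]
  · rw [Finset.sum_congr rfl key, ← Finset.mul_sum, sum_weight_powerset, mul_one]
  · intro F hF
    rw [Finset.mem_filter, Finset.mem_powerset] at hF
    rw [Finset.mem_powerset]
    exact Finset.sdiff_subset_sdiff hF.1 (Finset.Subset.refl _)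
  · intro F hF
    rw [Finset.mem_powerset] at hF
    rw [Finset.mem_filter, Finset.mem_powerset]
    exact ⟨Finset.union_subset (hF.trans Finset.sdiff_subset) h, Finset.subset_union_right⟩
  · intro F hF
    rw [Finset.mem_filter, Finset.mem_powerset] at hF
    exact Finset.sdiff_union_of_subset hF.2
  · intro F hF
    rw [Finset.mem_powerset] at hF
    exact Finset.union_sdiff_cancel_right
      (Finset.disjoint_of_subset_left hF Finset.sdiff_disjoint)
  · intro F hF
    rw [Finset.mem_filter, Finset.mem_powerset] at hF
    rw [Finset.sdiff_union_of_subset hF.2]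

open Classical in
/-- Probability that the Erdős–Rényi random graph `G(N,p)` lies in the set `A`. -/
noncomputable def erProb (N : ℕ) (p : ℝ) (A : Set (SimpleGraph (Fin N))) : ℝ :=
  ∑ G : SimpleGraph (Fin N),
    if G ∈ A then p ^ G.edgeSet.ncard * (1 - p) ^ (N.choose 2 - G.edgeSet.ncard) else 0

open Classical in
noncomputable def allEdges (N : ℕ) : Finset (Sym2 (Fin N)) :=
  Finset.univ.filter (fun e => ¬ e.IsDiag)

open Classical in
lemma card_allEdges (N : ℕ) : (allEdges N).card = N.choose 2 := by
  rw [allEdges, ← Fintype.card_subtype]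
  rw [Sym2.card_subtype_not_diag, Fintype.card_fin]

open Classical in
lemma mem_allEdges {N : ℕ} {e : Sym2 (Fin N)} : e ∈ allEdges N ↔ ¬ e.IsDiag := by
  simp [allEdges]

open Classical in
lemma edgeSet_from_subset {N : ℕ} {F : Finset (Sym2 (Fin N))} (hF : F ∈ (allEdges N).powerset) :
    (SimpleGraph.fromEdgeSet (F : Set (Sym2 (Fin N)))).edgeSet = (F : Set (Sym2 (Fin N))) := by
  rw [Finset.mem_powerset] at hF
  rw [SimpleGraph.edgeSet_fromEdgeSet]
  ext e
  simp only [Set.mem_diff, Set.mem_setOf_eq, Finset.mem_coe, and_iff_left_iff_imp]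
  intro he
  exact mem_allEdges.1 (hF he)

open Classical in
lemma sum_graphs_eq {N : ℕ} (f : SimpleGraph (Fin N) → ℝ) :
    ∑ G : SimpleGraph (Fin N), f G
      = ∑ F ∈ (allEdges N).powerset, f (SimpleGraph.fromEdgeSet (F : Set (Sym2 (Fin N)))) := by
  refine Finset.sum_nbij' (fun G => G.edgeFinset)
    (fun F => SimpleGraph.fromEdgeSet (F : Set (Sym2 (Fin N)))) ?_ ?_ ?_ ?_ ?_
  · intro G _
    rw [Finset.mem_powerset]
    intro e he
    rw [mem_allEdges]
    rw [SimpleGraph.mem_edgeFinset] at he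
    exact SimpleGraph.not_isDiag_of_mem_edgeSet G he
  · intro F _
    exact Finset.mem_univ _
  · intro G _
    beta_reduce
    rw [SimpleGraph.coe_edgeFinset, SimpleGraph.fromEdgeSet_edgeSet]
  · intro F hF
    beta_reduce
    apply Finset.coe_injective
    rw [SimpleGraph.coe_edgeFinset, edgeSet_from_subset hF]
  · intro G _
    beta_reduce
    rw [SimpleGraph.coe_edgeFinset, SimpleGraph.fromEdgeSet_edgeSet]

open Classical in
lemma erProb_eq {N : ℕ} (p : ℝ) (A : Set (SimpleGraph (Fin N))) :
    erProb N p A = ∑ F ∈ (allEdges N).powerset,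
      if SimpleGraph.fromEdgeSet (F : Set (Sym2 (Fin N))) ∈ A
      then p ^ F.card * (1 - p) ^ ((allEdges N).card - F.card) else 0 := by
  rw [erProb, sum_graphs_eq (f := fun G =>
    if G ∈ A then p ^ G.edgeSet.ncard * (1 - p) ^ (N.choose 2 - G.edgeSet.ncard) else 0)]
  apply Finset.sum_congr rfl
  intro F hF
  rw [edgeSet_from_subset hF, Set.ncard_coe_finset, card_allEdges]

lemma erProb_nonneg {N : ℕ} {p : ℝ} (hp0 : 0 ≤ p) (hp1 : p ≤ 1)
    (A : Set (SimpleGraph (Fin N))) : 0 ≤ erProb N p A := by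
  rw [erProb]
  apply Finset.sum_nonneg
  intro G _
  split
  · exact mul_nonneg (pow_nonneg hp0 _) (pow_nonneg (by linarith) _)
  · exact le_refl 0

open Classical in
lemma erProb_univ (N : ℕ) (p : ℝ) : erProb N p Set.univ = 1 := by
  rw [erProb_eq]
  simp only [Set.mem_univ, if_true]
  exact sum_weight_powerset p (allEdges N)

open Classical in
lemma erProb_add_compl {N : ℕ} (p : ℝ) (A : Set (SimpleGraph (Fin N))) :
    erProb N p A + erProb N p Aᶜ = 1 := by
  rw [← erProb_univ N p]
  rw [erProb, erProb, erProb, ← Finset.sum_add_distrib]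
  apply Finset.sum_congr rfl
  intro G _
  by_cases h : G ∈ A <;> simp [h]

lemma erProb_mono {N : ℕ} {p : ℝ} (hp0 : 0 ≤ p) (hp1 : p ≤ 1)
    {A B : Set (SimpleGraph (Fin N))} (hAB : A ⊆ B) : erProb N p A ≤ erProb N p B := by
  rw [erProb, erProb]
  apply Finset.sum_le_sum
  intro G _
  by_cases h : G ∈ A
  · simp [h, hAB h]
  · simp only [h, if_false]
    split
    · exact mul_nonneg (pow_nonneg hp0 _) (pow_nonneg (by linarith) _)
    · exact le_refl 0

lemma erProb_le_one {N : ℕ} {p : ℝ} (hp0 : 0 ≤ p) (hp1 : p ≤ 1)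
    (A : Set (SimpleGraph (Fin N))) : erProb N p A ≤ 1 := by
  rw [← erProb_univ N p]
  exact erProb_mono hp0 hp1 (Set.subset_univ A)

lemma erProb_biUnion_le {N : ℕ} {p : ℝ} (hp0 : 0 ≤ p) (hp1 : p ≤ 1)
    {ι : Type*} (s : Finset ι) (A : ι → Set (SimpleGraph (Fin N))) :
    erProb N p (⋃ i ∈ s, A i) ≤ ∑ i ∈ s, erProb N p (A i) := by
  classical
  rw [erProb]
  simp only [erProb]
  rw [Finset.sum_comm]
  apply Finset.sum_le_sum
  intro G _
  set w : ℝ := p ^ G.edgeSet.ncard * (1 - p) ^ (N.choose 2 - G.edgeSet.ncard) with hw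
  have hw0 : 0 ≤ w := mul_nonneg (pow_nonneg hp0 _) (pow_nonneg (by linarith) _)
  by_cases h : G ∈ ⋃ i ∈ s, A i
  · simp only [h, if_true]
    obtain ⟨i, hi, hGi⟩ := by simpa using h
    calc w = (fun i => if G ∈ A i then w else 0) i := by simp [hGi]
    _ ≤ ∑ i ∈ s, (if G ∈ A i then w else 0) := by
        apply Finset.single_le_sum (fun j _ => ?_) hi
        split
        · exact hw0
        · exact le_refl 0
  · simp only [h, if_false]
    apply Finset.sum_nonneg
    intro i _
    split
    · exact hw0
    · exact le_refl 0

open Classical in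
lemma erProb_subedges {N : ℕ} (p : ℝ) {F₀ : Finset (Sym2 (Fin N))}
    (hF₀ : F₀ ⊆ allEdges N) :
    erProb N p {G | (F₀ : Set (Sym2 (Fin N))) ⊆ G.edgeSet} = p ^ F₀.card := by
  rw [erProb_eq]
  have : ∀ F ∈ (allEdges N).powerset,
      (if SimpleGraph.fromEdgeSet (F : Set (Sym2 (Fin N)))
          ∈ {G : SimpleGraph (Fin N) | (F₀ : Set (Sym2 (Fin N))) ⊆ G.edgeSet}
       then p ^ F.card * (1 - p) ^ ((allEdges N).card - F.card) else 0)
      = (if F₀ ⊆ F then p ^ F.card * (1 - p) ^ ((allEdges N).card - F.card) else 0) := by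
    intro F hF
    have : (SimpleGraph.fromEdgeSet (F : Set (Sym2 (Fin N)))
        ∈ {G : SimpleGraph (Fin N) | (F₀ : Set (Sym2 (Fin N))) ⊆ G.edgeSet}) ↔ F₀ ⊆ F := by
      rw [Set.mem_setOf_eq, edgeSet_from_subset hF, Finset.coe_subset]
    rw [if_congr this (Eq.refl _) (Eq.refl _)]
  rw [Finset.sum_congr rfl this, ← Finset.sum_filter]
  exact sum_weight_powerset_filter p hF₀

open Classical in
noncomputable def cand {N : ℕ} (S T : Finset (Fin N)) : Finset (Sym2 (Fin N)) :=
  ((S ∪ T).sym2).filter (fun e => ¬ e.IsDiag ∧ ∃ v ∈ e, v ∈ S)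

open Classical in
lemma cand_subset_allEdges {N : ℕ} (S T : Finset (Fin N)) : cand S T ⊆ allEdges N := by
  intro e he
  rw [cand, Finset.mem_filter] at he
  exact mem_allEdges.2 he.2.1

/-- The number of edges of `G` with both endpoints in `S ∪ T` and at least one endpoint
in `S`. -/
noncomputable def crossEdges {N : ℕ} (G : SimpleGraph (Fin N)) (S T : Finset (Fin N)) : ℕ :=
  {e ∈ G.edgeSet | (∀ v ∈ e, v ∈ S ∪ T) ∧ ∃ v ∈ e, v ∈ S}.ncard

open Classical in
lemma crossEdges_eq {N : ℕ} (G : SimpleGraph (Fin N)) (S T : Finset (Fin N)) :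
    crossEdges G S T = (G.edgeFinset ∩ cand S T).card := by
  rw [crossEdges]
  have hset : {e ∈ G.edgeSet | (∀ v ∈ e, v ∈ S ∪ T) ∧ ∃ v ∈ e, v ∈ S}
      = ((G.edgeFinset ∩ cand S T : Finset (Sym2 (Fin N))) : Set (Sym2 (Fin N))) := by
    ext e
    simp only [Set.mem_setOf_eq, Finset.coe_inter, Set.mem_inter_iff, Finset.mem_coe,
      SimpleGraph.mem_edgeFinset, cand, Finset.mem_filter, Finset.mem_sym2_iff]
    constructor
    · rintro ⟨he, hST, hS⟩
      exact ⟨he, hST, SimpleGraph.not_isDiag_of_mem_edgeSet G he, hS⟩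
    · rintro ⟨he, hST, _, hS⟩
      exact ⟨he, hST, hS⟩
  rw [hset, Set.ncard_coe_finset]

open Classical in
lemma cand_card_le {N : ℕ} {S T : Finset (Fin N)} {n : ℕ} (hd : Disjoint S T)
    (hS : S.card = n) (hT : T.card = n) : 2 * (cand S T).card ≤ 3 * n ^ 2 := by
  have hsub : cand S T ⊆ (S.sym2.filter (fun e => ¬ e.IsDiag))
      ∪ (S ×ˢ T).image (fun x => s(x.1, x.2)) := by
    intro e he
    rw [cand, Finset.mem_filter, Finset.mem_sym2_iff] at he
    obtain ⟨hST, hdiag, hS'⟩ := he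
    induction e with
    | _ a b =>
      rw [Finset.mem_union]
      have hab : a ≠ b := by
        intro h; exact hdiag (by rw [h]; exact Sym2.isDiag_iff_proj_eq.2 rfl)
      have haST := hST a (Sym2.mem_mk_left a b)
      have hbST := hST b (Sym2.mem_mk_right a b)
      obtain ⟨v, hv, hvS⟩ := hS'
      rcases Sym2.mem_iff.1 hv with rfl | rfl
      · rcases Finset.mem_union.1 hbST with hb | hb
        · left
          rw [Finset.mem_filter, Finset.mem_sym2_iff]
          refine ⟨?_, fun h => hdiag h⟩
          intro x hx
          rcases Sym2.mem_iff.1 hx with rfl | rfl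
          · exact hvS
          · exact hb
        · right
          exact Finset.mem_image.2 ⟨(v, b), Finset.mem_product.2 ⟨hvS, hb⟩, rfl⟩
      · rcases Finset.mem_union.1 haST with ha | ha
        · left
          rw [Finset.mem_filter, Finset.mem_sym2_iff]
          refine ⟨?_, fun h => hdiag h⟩
          intro x hx
          rcases Sym2.mem_iff.1 hx with rfl | rfl
          · exact ha
          · exact hvS
        · right
          refine Finset.mem_image.2 ⟨(v, a), Finset.mem_product.2 ⟨hvS, ha⟩, ?_⟩
          exact Sym2.eq_swap
  have h1 : (cand S T).card ≤ (S.sym2.filter (fun e => ¬ e.IsDiag)).card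
      + ((S ×ˢ T).image (fun x => s(x.1, x.2))).card :=
    (Finset.card_le_card hsub).trans (Finset.card_union_le _ _)
  have h2 : ((S ×ˢ T).image (fun x => s(x.1, x.2))).card ≤ n ^ 2 := by
    calc ((S ×ˢ T).image (fun x => s(x.1, x.2))).card ≤ (S ×ˢ T).card :=
        Finset.card_image_le
    _ = n ^ 2 := by rw [Finset.card_product, hS, hT, sq]
  have hdiagset : S.sym2.filter (fun e => e.IsDiag) = S.image Sym2.diag := by
    ext e
    simp only [Finset.mem_filter, Finset.mem_sym2_iff, Finset.mem_image]
    constructor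
    · rintro ⟨hmem, hdiag⟩
      obtain ⟨a, rfl⟩ : ∃ a, Sym2.diag a = e := ⟨_, Sym2.diag_diagElem hdiag⟩
      exact ⟨a, hmem a (by rw [Sym2.diag]; exact Sym2.mem_mk_left a a), rfl⟩
    · rintro ⟨a, ha, rfl⟩
      constructor
      · intro x hx
        rw [Sym2.diag] at hx
        rcases Sym2.mem_iff.1 hx with rfl | rfl <;> exact ha
      · exact Sym2.diag_isDiag a
  have h3 : (S.sym2.filter (fun e => ¬ e.IsDiag)).card + n = S.sym2.card := by
    have := Finset.card_filter_add_card_filter_not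
      (s := S.sym2) (p := fun e => e.IsDiag)
    beta_reduce at this
    rw [hdiagset] at this
    rw [Finset.card_image_of_injective _ Sym2.diag_injective, hS] at this
    omega
  have h4 : S.sym2.card = (n + 1).choose 2 := by rw [Finset.card_sym2, hS]
  have h5 : (n+1).choose 2 = (n+1) * n / 2 := by
    rw [Nat.choose_two_right]
    simp
  have h6 : 2 * ((n+1) * n / 2) = (n+1) * n := by
    apply Nat.two_mul_div_two_of_even
    rw [Nat.mul_comm]
    exact Nat.even_mul_succ_self n
  have h7 : (n + 1) * n = n * n + n := by ring
  have hsq : n ^ 2 = n * n := sq n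
  omega

lemma erProb_empty (N : ℕ) (p : ℝ) : erProb N p ∅ = 0 := by
  rw [erProb]
  apply Finset.sum_eq_zero
  intro G _
  simp

open Classical in
lemma bad_subset {N n : ℕ} {p : ℝ} (hp0 : 0 ≤ p) :
    {G : SimpleGraph (Fin N) | ∃ S T : Finset (Fin N), Disjoint S T ∧ S.card = n ∧ T.card = n ∧
        18 * (n : ℝ) ^ 2 * p < (crossEdges G S T : ℝ)}
    ⊆ ⋃ ST ∈ ((Finset.powersetCard n (Finset.univ : Finset (Fin N))) ×ˢ
          (Finset.powersetCard n (Finset.univ : Finset (Fin N)))).filter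
          (fun ST => Disjoint ST.1 ST.2),
        ⋃ F₀ ∈ Finset.powersetCard (⌊18 * (n:ℝ)^2 * p⌋₊ + 1) (cand ST.1 ST.2),
          {G : SimpleGraph (Fin N) | (F₀ : Set (Sym2 (Fin N))) ⊆ G.edgeSet} := by
  rintro G ⟨S, T, hd, hS, hT, hlt⟩
  set t := ⌊18 * (n:ℝ)^2 * p⌋₊ + 1 with htdef
  have hp0' : (0:ℝ) ≤ 18 * (n:ℝ)^2 * p := by positivity
  have ht : t ≤ crossEdges G S T := by
    have : ⌊18 * (n:ℝ)^2 * p⌋₊ < crossEdges G S T := (Nat.floor_lt hp0').2 hlt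
    omega
  rw [crossEdges_eq] at ht
  obtain ⟨F₀, hF₀sub, hF₀card⟩ :=
    Finset.exists_subset_card_eq ht
  simp only [Set.mem_iUnion]
  refine ⟨(S, T), ?_, F₀, ?_, ?_⟩
  · rw [Finset.mem_filter, Finset.mem_product]
    exact ⟨⟨Finset.mem_powersetCard.2 ⟨Finset.subset_univ _, hS⟩,
      Finset.mem_powersetCard.2 ⟨Finset.subset_univ _, hT⟩⟩, hd⟩
  · exact Finset.mem_powersetCard.2
      ⟨hF₀sub.trans (Finset.inter_subset_right), hF₀card⟩
  · intro e he
    rw [Finset.mem_coe] at he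
    have := hF₀sub he
    rw [Finset.mem_inter, SimpleGraph.mem_edgeFinset] at this
    exact this.1

lemma log_twelve_ge : (2.4 : ℝ) ≤ Real.log 12 := by
  rw [Real.le_log_iff_exp_le (by norm_num : (0:ℝ) < 12)]
  have h1 : Real.exp 2.4 ^ (5:ℕ) = Real.exp 12 := by
    rw [← Real.exp_nat_mul]; norm_num
  have h2 : Real.exp 12 = Real.exp 1 ^ (12:ℕ) := by
    rw [← Real.exp_nat_mul]; norm_num
  have h3 : Real.exp 1 ^ (12:ℕ) ≤ (2.7182818286 : ℝ) ^ (12:ℕ) :=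
    pow_le_pow_left₀ (Real.exp_pos 1).le Real.exp_one_lt_d9.le 12
  have h4 : (2.7182818286 : ℝ) ^ (12:ℕ) ≤ (12:ℝ) ^ (5:ℕ) := by norm_num
  have h5 : Real.exp 2.4 ^ (5:ℕ) ≤ (12:ℝ) ^ (5:ℕ) := by
    rw [h1, h2]; exact h3.trans h4
  exact le_of_pow_le_pow_left₀ (by norm_num) (by norm_num) h5

set_option maxHeartbeats 1000000 in
open Classical in
lemma main_bound {n N : ℕ} {p : ℝ} (hp0 : 0 ≤ p) (hp1 : p ≤ 1)
    (hN : 3 * n ≤ N) (hnp : Real.log ((N:ℝ)/(n:ℝ)) / 6 ≤ (n:ℝ) * p) :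
    erProb N p {G | ∃ S T : Finset (Fin N), Disjoint S T ∧ S.card = n ∧ T.card = n ∧
        18 * (n : ℝ) ^ 2 * p < (crossEdges G S T : ℝ)} ≤ Real.exp (-(0.19 * n)) := by
  rcases Nat.eq_zero_or_pos n with hn0 | hn
  · subst hn0
    have hsub : {G : SimpleGraph (Fin N) | ∃ S T : Finset (Fin N),
        Disjoint S T ∧ S.card = 0 ∧ T.card = 0 ∧
        18 * ((0:ℕ) : ℝ) ^ 2 * p < (crossEdges G S T : ℝ)} ⊆ (∅ : Set _) := by
      rintro G ⟨S, T, hd, hS, hT, hlt⟩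
      exfalso
      rw [Finset.card_eq_zero] at hS
      subst hS
      have hzero : crossEdges G ∅ T = 0 := by
        rw [crossEdges]
        convert Set.ncard_empty (Sym2 (Fin N)) using 2
        ext e
        simp
      rw [hzero] at hlt
      norm_num at hlt
    calc erProb N p _ ≤ erProb N p ∅ := erProb_mono hp0 hp1 hsub
    _ = 0 := erProb_empty N p
    _ ≤ _ := (Real.exp_pos _).le
  · -- main case : n ≥ 1
    have hn1 : (1:ℝ) ≤ (n:ℝ) := by exact_mod_cast hn
    have hnR : (0:ℝ) < (n:ℝ) := by linarith
    have hNn : (3 * n : ℝ) ≤ (N:ℝ) := by exact_mod_cast hN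
    set L := Real.log ((N:ℝ)/(n:ℝ)) with hLdef
    have hx3 : (3:ℝ) ≤ (N:ℝ)/(n:ℝ) := by
      rw [le_div_iff₀ hnR]; linarith
    have hxpos : (0:ℝ) < (N:ℝ)/(n:ℝ) := by linarith
    have hL1 : 1 ≤ L := by
      rw [hLdef, Real.le_log_iff_exp_le hxpos]
      calc Real.exp 1 ≤ 2.7182818286 := Real.exp_one_lt_d9.le
      _ ≤ 3 := by norm_num
      _ ≤ _ := hx3
    have hp_pos : 0 < p := by
      by_contra h
      push_neg at h
      nlinarith [mul_nonpos_of_nonneg_of_nonpos hnR.le h]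
    set t := ⌊18 * (n:ℝ)^2 * p⌋₊ + 1 with htdef
    have htR : 18 * (n:ℝ)^2 * p < (t:ℝ) := by
      rw [htdef]
      push_cast
      exact Nat.lt_floor_add_one _
    have htL : 3 * (n:ℝ) * L ≤ (t:ℝ) := by
      nlinarith [mul_nonneg hnR.le (sub_nonneg.2 hnp)]
    -- per-pair bound
    have hA : ∀ m : ℕ, (m:ℝ) ≤ 3/2 * (n:ℝ)^2 →
        (m.choose t : ℝ) * p ^ t ≤ Real.exp ((t:ℝ) * (1 - Real.log 12)) := by
      intro m hm
      have hfac : (0:ℝ) < (t.factorial : ℝ) := by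
        exact_mod_cast t.factorial_pos
      have h1 : (m.choose t : ℝ) ≤ (m:ℝ)^t / (t.factorial : ℝ) :=
        Nat.choose_le_pow_div t m
      have hmp : (m:ℝ) * p ≤ (t:ℝ)/12 := by nlinarith
      have h2 : (m.choose t : ℝ) * p ^ t ≤ ((m:ℝ) * p)^t / (t.factorial : ℝ) :=
        calc (m.choose t : ℝ) * p ^ t
            ≤ ((m:ℝ)^t / (t.factorial : ℝ)) * p ^ t :=
              mul_le_mul_of_nonneg_right h1 (pow_nonneg hp0 t)
        _ = ((m:ℝ) * p)^t / (t.factorial : ℝ) := by rw [mul_pow]; ring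
      have h3 : ((m:ℝ) * p)^t ≤ ((t:ℝ)/12)^t :=
        pow_le_pow_left₀ (mul_nonneg (Nat.cast_nonneg m) hp0) hmp t
      have h5 : (t:ℝ)^t / (t.factorial : ℝ) ≤ Real.exp t :=
        Real.pow_div_factorial_le_exp _ (Nat.cast_nonneg t) t
      have h6 : Real.exp ((t:ℝ) * (1 - Real.log 12)) = (1/12:ℝ)^t * Real.exp t := by
        rw [mul_one_sub, Real.exp_sub, Real.exp_nat_mul,
          Real.exp_log (by norm_num : (0:ℝ) < 12)]
        rw [div_eq_mul_inv, ← inv_pow, mul_comm]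
        norm_num
      calc (m.choose t : ℝ) * p ^ t ≤ ((m:ℝ) * p)^t / (t.factorial : ℝ) := h2
      _ ≤ ((t:ℝ)/12)^t / (t.factorial : ℝ) := div_le_div_of_nonneg_right h3 hfac.le
      _ = (1/12:ℝ)^t * ((t:ℝ)^t / (t.factorial : ℝ)) := by rw [div_pow, one_div, inv_pow]; ring
      _ ≤ (1/12:ℝ)^t * Real.exp t :=
          mul_le_mul_of_nonneg_left h5 (by positivity)
      _ = Real.exp ((t:ℝ) * (1 - Real.log 12)) := h6.symm
    -- binomial coefficient bound
    have hCn : (N.choose n : ℝ) ≤ Real.exp ((n:ℝ) * (1 + L)) := by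
      have h1 : (N.choose n : ℝ) ≤ (N:ℝ)^n / (n.factorial : ℝ) := Nat.choose_le_pow_div n N
      have h2 : (n:ℝ)^n / (n.factorial : ℝ) ≤ Real.exp n :=
        Real.pow_div_factorial_le_exp _ hnR.le n
      have hfn : (0:ℝ) < (n.factorial : ℝ) := by exact_mod_cast n.factorial_pos
      have hNpos : (0:ℝ) < (N:ℝ) := by linarith
      have key : (N:ℝ)^n / (n.factorial:ℝ)
          = ((N:ℝ)/(n:ℝ))^n * ((n:ℝ)^n / (n.factorial : ℝ)) := by
        rw [div_pow]
        field_simp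
      have h3 : (N.choose n : ℝ) ≤ ((N:ℝ)/(n:ℝ))^n * Real.exp n := by
        rw [key] at h1
        exact h1.trans (mul_le_mul_of_nonneg_left h2 (pow_nonneg hxpos.le n))
      have h4 : ((N:ℝ)/(n:ℝ))^n = Real.exp ((n:ℝ) * L) := by
        rw [hLdef, Real.exp_nat_mul, Real.exp_log hxpos]
      calc (N.choose n:ℝ) ≤ ((N:ℝ)/(n:ℝ))^n * Real.exp n := h3
      _ = Real.exp ((n:ℝ)*L) * Real.exp n := by rw [h4]
      _ = Real.exp ((n:ℝ)*(1+L)) := by rw [← Real.exp_add]; ring_nf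
    set P := ((Finset.powersetCard n (Finset.univ : Finset (Fin N))) ×ˢ
        (Finset.powersetCard n (Finset.univ : Finset (Fin N)))).filter
        (fun ST => Disjoint ST.1 ST.2) with hPdef
    set B := Real.exp ((t:ℝ) * (1 - Real.log 12)) with hBdef
    have hB0 : (0:ℝ) ≤ B := (Real.exp_pos _).le
    have inner : ∀ ST ∈ P, ∑ F₀ ∈ Finset.powersetCard t (cand ST.1 ST.2),
        erProb N p {G : SimpleGraph (Fin N) | (F₀ : Set (Sym2 (Fin N))) ⊆ G.edgeSet} ≤ B := by
      intro ST hST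
      have hd : Disjoint ST.1 ST.2 := (Finset.mem_filter.1 hST).2
      have hmem := (Finset.mem_filter.1 hST).1
      rw [Finset.mem_product] at hmem
      have hS : ST.1.card = n := (Finset.mem_powersetCard.1 hmem.1).2
      have hT : ST.2.card = n := (Finset.mem_powersetCard.1 hmem.2).2
      have hcard : 2 * (cand ST.1 ST.2).card ≤ 3 * n^2 := cand_card_le hd hS hT
      have hsum : ∑ F₀ ∈ Finset.powersetCard t (cand ST.1 ST.2),
          erProb N p {G : SimpleGraph (Fin N) | (F₀ : Set (Sym2 (Fin N))) ⊆ G.edgeSet}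
          = (((cand ST.1 ST.2).card.choose t : ℕ) : ℝ) * p ^ t := by
        rw [Finset.sum_congr rfl (fun F₀ hF₀ => ?_), Finset.sum_const,
          Finset.card_powersetCard, nsmul_eq_mul]
        obtain ⟨hsub, hcardF⟩ := Finset.mem_powersetCard.1 hF₀
        rw [erProb_subedges p (hsub.trans (cand_subset_allEdges _ _)), hcardF]
      rw [hsum, hBdef]
      apply hA
      have hc : ((2 * (cand ST.1 ST.2).card : ℕ) : ℝ) ≤ ((3 * n^2 : ℕ) : ℝ) := by
        exact_mod_cast hcard
      push_cast at hc
      linarith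
    have hPcard : (P.card : ℝ) ≤ (N.choose n : ℝ)^2 := by
      have hcP : P.card ≤ (N.choose n) * (N.choose n) := by
        calc P.card ≤ ((Finset.powersetCard n (Finset.univ : Finset (Fin N))) ×ˢ
            (Finset.powersetCard n (Finset.univ : Finset (Fin N)))).card :=
            Finset.card_filter_le _ _
        _ = (N.choose n) * (N.choose n) := by
            rw [Finset.card_product, Finset.card_powersetCard, Finset.card_univ,
              Fintype.card_fin]
      calc (P.card:ℝ) ≤ (((N.choose n) * (N.choose n) : ℕ) : ℝ) := by exact_mod_cast hcP
      _ = (N.choose n:ℝ)^2 := by push_cast; ring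
    have total : erProb N p {G | ∃ S T : Finset (Fin N), Disjoint S T ∧ S.card = n ∧
        T.card = n ∧ 18 * (n : ℝ) ^ 2 * p < (crossEdges G S T : ℝ)}
        ≤ (N.choose n:ℝ)^2 * B := by
      calc erProb N p {G | ∃ S T : Finset (Fin N), Disjoint S T ∧ S.card = n ∧
          T.card = n ∧ 18 * (n : ℝ) ^ 2 * p < (crossEdges G S T : ℝ)}
          ≤ erProb N p (⋃ ST ∈ P, ⋃ F₀ ∈ Finset.powersetCard t (cand ST.1 ST.2),
            {G : SimpleGraph (Fin N) | (F₀ : Set (Sym2 (Fin N))) ⊆ G.edgeSet}) :=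
          erProb_mono hp0 hp1 (bad_subset hp0)
      _ ≤ ∑ ST ∈ P, erProb N p (⋃ F₀ ∈ Finset.powersetCard t (cand ST.1 ST.2),
            {G : SimpleGraph (Fin N) | (F₀ : Set (Sym2 (Fin N))) ⊆ G.edgeSet}) :=
          erProb_biUnion_le hp0 hp1 P _
      _ ≤ ∑ ST ∈ P, B := Finset.sum_le_sum (fun ST hST =>
          le_trans (erProb_biUnion_le hp0 hp1 _ _) (inner ST hST))
      _ = (P.card : ℝ) * B := by rw [Finset.sum_const, nsmul_eq_mul]
      _ ≤ (N.choose n:ℝ)^2 * B := mul_le_mul_of_nonneg_right hPcard hB0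
    have hfinal : (N.choose n:ℝ)^2 * B ≤ Real.exp (-(0.19*(n:ℝ))) := by
      have hC2 : (N.choose n:ℝ)^2 ≤ Real.exp ((n:ℝ)*(1+L))^2 :=
        pow_le_pow_left₀ (Nat.cast_nonneg _) hCn 2
      have hexp2 : Real.exp ((n:ℝ)*(1+L))^2 = Real.exp (2*((n:ℝ)*(1+L))) := by
        rw [← Real.exp_nat_mul]
        norm_num
      have h12 : 1 - Real.log 12 ≤ 0 := by nlinarith [log_twelve_ge]
      have hBle : B ≤ Real.exp (3*(n:ℝ)*L*(1 - Real.log 12)) := by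
        rw [hBdef, Real.exp_le_exp]
        nlinarith [mul_nonpos_of_nonneg_of_nonpos (sub_nonneg.2 htL) h12]
      calc (N.choose n:ℝ)^2 * B
          ≤ Real.exp (2*((n:ℝ)*(1+L))) * Real.exp (3*(n:ℝ)*L*(1-Real.log 12)) := by
            rw [← hexp2]
            exact mul_le_mul hC2 hBle hB0 (pow_nonneg (Real.exp_pos _).le 2)
      _ = Real.exp (2*((n:ℝ)*(1+L)) + 3*(n:ℝ)*L*(1-Real.log 12)) := by
            rw [Real.exp_add]
      _ ≤ Real.exp (-(0.19*(n:ℝ))) := by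
          rw [Real.exp_le_exp]
          nlinarith [mul_nonneg (mul_nonneg (mul_nonneg (by norm_num : (0:ℝ) ≤ 3) hnR.le)
              (le_trans zero_le_one hL1)) (sub_nonneg.2 log_twelve_ge),
            mul_nonneg hnR.le (sub_nonneg.2 hL1)]
    exact le_trans total hfinal

/-- If `N ≥ 3n` and `np ≥ log(N/n)/6`, then the probability that some disjoint `n`-sets
`S, T` span more than `18n²p` edges with at least one endpoint in `S` is at most
`exp(−0.19 n)`; in particular a.a.s. all such pairs span at most `18n²p` such edges. -/
theorem stmt8 (N : ℕ → ℕ) (p : ℕ → ℝ)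
    (hp0 : ∀ n, 0 ≤ p n) (hp1 : ∀ n, p n ≤ 1)
    (hN : ∀ n, 3 * n ≤ N n)
    (hnp : ∀ n : ℕ, Real.log ((N n : ℝ) / (n : ℝ)) / 6 ≤ (n : ℝ) * p n) :
    (∀ n : ℕ, erProb (N n) (p n)
        {G | ∃ S T : Finset (Fin (N n)), Disjoint S T ∧ S.card = n ∧ T.card = n ∧
              18 * (n : ℝ) ^ 2 * p n < (crossEdges G S T : ℝ)}
      ≤ Real.exp (-(0.19 * n))) ∧
    Tendsto (fun n : ℕ => erProb (N n) (p n)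
        {G | ∀ S T : Finset (Fin (N n)), Disjoint S T → S.card = n → T.card = n →
              (crossEdges G S T : ℝ) ≤ 18 * (n : ℝ) ^ 2 * p n}) atTop (nhds 1) := by
  have hbad : ∀ n : ℕ, erProb (N n) (p n)
      {G | ∃ S T : Finset (Fin (N n)), Disjoint S T ∧ S.card = n ∧ T.card = n ∧
        18 * (n : ℝ) ^ 2 * p n < (crossEdges G S T : ℝ)} ≤ Real.exp (-(0.19 * n)) :=
    fun n => main_bound (hp0 n) (hp1 n) (hN n) (hnp n)
  refine ⟨hbad, ?_⟩
  have hgood : ∀ n : ℕ, erProb (N n) (p n)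
      {G | ∀ S T : Finset (Fin (N n)), Disjoint S T → S.card = n → T.card = n →
        (crossEdges G S T : ℝ) ≤ 18 * (n : ℝ) ^ 2 * p n}
      = 1 - erProb (N n) (p n)
      {G | ∃ S T : Finset (Fin (N n)), Disjoint S T ∧ S.card = n ∧ T.card = n ∧
        18 * (n : ℝ) ^ 2 * p n < (crossEdges G S T : ℝ)} := by
    intro n
    have hc : {G : SimpleGraph (Fin (N n)) | ∀ S T : Finset (Fin (N n)),
        Disjoint S T → S.card = n → T.card = n →
        (crossEdges G S T : ℝ) ≤ 18 * (n : ℝ) ^ 2 * p n}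
        = {G : SimpleGraph (Fin (N n)) | ∃ S T : Finset (Fin (N n)),
          Disjoint S T ∧ S.card = n ∧ T.card = n ∧
          18 * (n : ℝ) ^ 2 * p n < (crossEdges G S T : ℝ)}ᶜ := by
      ext G
      simp only [Set.mem_setOf_eq, Set.mem_compl_iff, not_exists, not_and, not_lt]
    rw [hc]
    have := erProb_add_compl (p n) {G : SimpleGraph (Fin (N n)) | ∃ S T : Finset (Fin (N n)),
      Disjoint S T ∧ S.card = n ∧ T.card = n ∧
      18 * (n : ℝ) ^ 2 * p n < (crossEdges G S T : ℝ)}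
    linarith
  refine tendsto_of_tendsto_of_tendsto_of_le_of_le
    (g := fun n : ℕ => 1 - Real.exp (-(0.19 * n))) (h := fun _ : ℕ => (1:ℝ))
    ?_ tendsto_const_nhds ?_ ?_
  · have h1 : Tendsto (fun n : ℕ => Real.exp (-(0.19 * n))) atTop (nhds 0) := by
      have heq : (fun n : ℕ => Real.exp (-(0.19 * n))) = fun n : ℕ => Real.exp (-0.19) ^ n := by
        funext n
        rw [← Real.exp_nat_mul]
        ring_nf
      rw [heq]
      apply tendsto_pow_atTop_nhds_zero_of_lt_one (Real.exp_pos _).le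
      rw [Real.exp_lt_one_iff]
      norm_num
    have h2 : Tendsto (fun n : ℕ => 1 - Real.exp (-(0.19 * n))) atTop (nhds (1 - 0)) :=
      Filter.Tendsto.sub tendsto_const_nhds h1
    simpa using h2
  · intro n
    show _ ≤ erProb (N n) (p n) _
    rw [hgood n]
    show 1 - Real.exp (-(0.19 * n)) ≤ _
    linarith [hbad n]
  · intro n
    exact erProb_le_one (hp0 n) (hp1 n) _
end

section
/- Let r be a prime power, let n be divisible by r, and let N = r·n. Then there exists a coloring of the edges of the complete graph K_N with r+1 colors such that every monochromatic connected subgraph has at most n vertices. Consequently, for every graph G on N vertices (in particular for any instance of G(N,p)), we have c(G, P_{n+1}) ≤ r + 1. -/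
/-- The subgraph of `G` formed by the edges receiving color `i` under the edge coloring
`C`. -/
def monochromaticSubgraph {V : Type*} {k : ℕ} (G : SimpleGraph V)
    (C : Sym2 V → Fin k) (i : Fin k) : SimpleGraph V where
  Adj u v := G.Adj u v ∧ C s(u, v) = i
  symm := ⟨fun u v h => ⟨h.1.symm, by rw [Sym2.eq_swap]; exact h.2⟩⟩
  loopless := ⟨fun v h => G.loopless.irrefl v h.1⟩

/-- `c(G, P_{n+1})`: the minimum number of colors `k` admitting a `k`-coloring of the edges
of `G` with no monochromatic path on `n+1` vertices. -/
noncomputable def cNum (N n : ℕ) (G : SimpleGraph (Fin N)) : ℕ :=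
  sInf {k | ∃ C : Sym2 (Fin N) → Fin k, ∀ i, PathFree n (monochromaticSubgraph G C i)}

open SimpleGraph

lemma pathFree_of_small_components {N n : ℕ} {H : SimpleGraph (Fin N)}
    (h : ∀ v, ((H.connectedComponentMk v).supp).ncard ≤ n) : PathFree n H := by
  intro u v w hw
  by_contra hlen
  push_neg at hlen
  have hsub : ∀ x ∈ w.support, x ∈ (H.connectedComponentMk u).supp := by
    intro x hx
    rw [ConnectedComponent.mem_supp_iff]
    exact ConnectedComponent.sound ⟨(w.takeUntil x hx).reverse⟩
  have hcard : w.support.toFinset.card = w.length + 1 := by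
    rw [List.toFinset_card_of_nodup hw.support_nodup, Walk.length_support]
  have h2 : (↑w.support.toFinset : Set (Fin N)).ncard ≤ n := by
    refine le_trans (Set.ncard_le_ncard ?_ (Set.toFinite _)) (h u)
    intro x hx
    simp only [Finset.coe_sort_coe, List.coe_toFinset, Set.mem_setOf_eq] at hx
    exact hsub x hx
  rw [Set.ncard_coe_finset, hcard] at h2
  omega

lemma small_components_mono {N n : ℕ} {G H : SimpleGraph (Fin N)} (hGH : G ≤ H)
    (h : ∀ v, ((H.connectedComponentMk v).supp).ncard ≤ n) :
    ∀ v, ((G.connectedComponentMk v).supp).ncard ≤ n := by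
  intro v
  refine le_trans (Set.ncard_le_ncard ?_ (Set.toFinite _)) (h v)
  intro x hx
  rw [ConnectedComponent.mem_supp_iff] at *
  exact ConnectedComponent.eq.mpr ((ConnectedComponent.eq.mp hx).mono hGH)


section Core

variable {r n m : ℕ} {K : Type} [Field K] [Fintype K] [DecidableEq K]

/-- first coordinate (in K) of a vertex -/
noncomputable def Xc (e : K ≃ Fin r) (v : Fin (r * n)) : K :=
  e.symm (finProdFinEquiv.symm v).1

/-- second coordinate (in K) of a vertex -/
noncomputable def Yc (e : K ≃ Fin r) (v : Fin (r * n)) : K :=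
  e.symm ⟨((finProdFinEquiv.symm v).2 : ℕ) % r, Nat.mod_lt _ (e 1).pos⟩

noncomputable def colFun (e : K ≃ Fin r) (n : ℕ) (u v : Fin (r * n)) : Fin (r + 1) :=
  if Xc e u = Xc e v then
    (if Yc e u = Yc e v then 0 else Fin.last r)
  else (e ((Yc e v - Yc e u) / (Xc e v - Xc e u))).castSucc

lemma colFun_symm (e : K ≃ Fin r) (n : ℕ) (u v : Fin (r * n)) :
    colFun e n u v = colFun e n v u := by
  unfold colFun
  by_cases hx : Xc e u = Xc e v
  · rw [if_pos hx, if_pos hx.symm]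
    by_cases hy : Yc e u = Yc e v
    · rw [if_pos hy, if_pos hy.symm]
    · rw [if_neg hy, if_neg (fun h => hy h.symm)]
  · rw [if_neg hx, if_neg (Ne.symm hx)]
    congr 2
    rw [← neg_sub (Yc e v), ← neg_sub (Xc e v), neg_div_neg_eq]

noncomputable def invt (e : K ≃ Fin r) (n : ℕ) (i : Fin (r + 1)) (v : Fin (r * n)) : K :=
  if h : (i : ℕ) < r then Yc e v - e.symm ⟨i, h⟩ * Xc e v else Xc e v

lemma invt_step (e : K ≃ Fin r) {n : ℕ} {i : Fin (r + 1)} {u v : Fin (r * n)}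
    (hC : colFun e n u v = i) : invt e n i u = invt e n i v := by
  unfold colFun at hC
  unfold invt
  by_cases hx : Xc e u = Xc e v
  · rw [if_pos hx] at hC
    by_cases hy : Yc e u = Yc e v
    · rw [if_pos hy] at hC
      subst hC
      have h0 : ((0 : Fin (r + 1)) : ℕ) < r := by
        simpa using (e 1).pos
      rw [dif_pos h0, dif_pos h0, hx, hy]
    · rw [if_neg hy] at hC
      subst hC
      have h0 : ¬ ((Fin.last r : Fin (r + 1)) : ℕ) < r := by simp
      rw [dif_neg h0, dif_neg h0]
      exact hx
  · rw [if_neg hx] at hC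
    subst hC
    have h0 : ((Fin.castSucc (e ((Yc e v - Yc e u) / (Xc e v - Xc e u)))) : ℕ) < r := by
      simp [Fin.is_lt]
    rw [dif_pos h0, dif_pos h0]
    have hes : e.symm ⟨((Fin.castSucc (e ((Yc e v - Yc e u) / (Xc e v - Xc e u)))) : ℕ), h0⟩
        = (Yc e v - Yc e u) / (Xc e v - Xc e u) := by
      simp [Fin.eta]
    rw [hes]
    have hd : Xc e v - Xc e u ≠ 0 := sub_ne_zero_of_ne (Ne.symm hx)
    have hmul : (Yc e v - Yc e u) / (Xc e v - Xc e u) * (Xc e v - Xc e u)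
        = Yc e v - Yc e u := div_mul_cancel₀ _ hd
    linear_combination hmul

end Core

section Card

lemma ncard_le_of_injOn_fin {N n : ℕ} {T : Set (Fin N)} (f : Fin N → Fin n)
    (hf : Set.InjOn f T) : T.ncard ≤ n := by
  calc T.ncard = (f '' T).ncard := (Set.ncard_image_of_injOn hf).symm
    _ ≤ (Set.univ : Set (Fin n)).ncard :=
        Set.ncard_le_ncard (Set.subset_univ _) (Set.toFinite _)
    _ = n := by simp [Set.ncard_univ]

variable {r n m : ℕ} {K : Type} [Field K] [Fintype K] [DecidableEq K]

lemma invt_fiber_card (e : K ≃ Fin r) (hn : n = r * m) (i : Fin (r + 1)) (c : K) :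
    {x : Fin (r * n) | invt e n i x = c}.ncard ≤ n := by
  have hr : 0 < r := (e 1).pos
  by_cases h : (i : ℕ) < r
  · -- slope case
    set s := e.symm ⟨i, h⟩ with hs
    refine ncard_le_of_injOn_fin
      (fun x => ⟨((finProdFinEquiv.symm x).2 : ℕ) / r * r + ((finProdFinEquiv.symm x).1 : ℕ),
        ?_⟩) ?_
    · have hb : ((finProdFinEquiv.symm x).2 : ℕ) < n := (finProdFinEquiv.symm x).2.isLt
      have ha : ((finProdFinEquiv.symm x).1 : ℕ) < r := (finProdFinEquiv.symm x).1.isLt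
      have ht : ((finProdFinEquiv.symm x).2 : ℕ) / r < m :=
        (Nat.div_lt_iff_lt_mul hr).mpr (by rw [Nat.mul_comm m r]; omega)
      calc ((finProdFinEquiv.symm x).2 : ℕ) / r * r + ((finProdFinEquiv.symm x).1 : ℕ)
          < (((finProdFinEquiv.symm x).2 : ℕ) / r + 1) * r := by rw [Nat.add_mul]; omega
        _ ≤ m * r := Nat.mul_le_mul_right r ht
        _ = n := by rw [Nat.mul_comm m r]; omega
    · intro x hx y hy hxy
      simp only [Set.mem_setOf_eq, invt, dif_pos h] at hx hy
      have hval := congrArg Fin.val hxy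
      simp only at hval
      set ax := ((finProdFinEquiv.symm x).1 : ℕ) with hax
      set ay := ((finProdFinEquiv.symm y).1 : ℕ) with hay
      set bx := ((finProdFinEquiv.symm x).2 : ℕ) with hbx
      set by' := ((finProdFinEquiv.symm y).2 : ℕ) with hby
      have hax' : ax < r := (finProdFinEquiv.symm x).1.isLt
      have hay' : ay < r := (finProdFinEquiv.symm y).1.isLt
      -- divide by r to recover the quotients
      have hdivx : (bx / r * r + ax) / r = bx / r := by
        rw [Nat.add_comm, Nat.add_mul_div_right _ _ hr, Nat.div_eq_of_lt hax']; omega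
      have hdivy : (by' / r * r + ay) / r = by' / r := by
        rw [Nat.add_comm, Nat.add_mul_div_right _ _ hr, Nat.div_eq_of_lt hay']; omega
      have hdiv : bx / r = by' / r := by rw [← hdivx, ← hdivy, hval]
      have haeq : ax = ay := by rw [hdiv] at hval; omega
      -- first coordinates agree
      have hA : (finProdFinEquiv.symm x).1 = (finProdFinEquiv.symm y).1 := Fin.ext haeq
      have hX : Xc e x = Xc e y := by unfold Xc; rw [hA]
      -- invariants give equal Y coordinates
      have hY : Yc e x = Yc e y := by
        have h2 : Yc e x - s * Xc e x = Yc e y - s * Xc e y := hx.trans hy.symm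
        rw [hX] at h2
        exact sub_left_injective h2
      have hmod : bx % r = by' % r := by
        have := e.symm.injective hY
        exact congrArg Fin.val this
      have hb : bx = by' := by
        rw [← Nat.div_add_mod bx r, ← Nat.div_add_mod by' r, hdiv, hmod]
      have hB : (finProdFinEquiv.symm x).2 = (finProdFinEquiv.symm y).2 := Fin.ext hb
      have : (finProdFinEquiv.symm x) = (finProdFinEquiv.symm y) := Prod.ext hA hB
      exact finProdFinEquiv.symm.injective this
  · -- vertical case
    refine ncard_le_of_injOn_fin (fun x => (finProdFinEquiv.symm x).2) ?_
    intro x hx y hy hxy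
    simp only [Set.mem_setOf_eq, invt, dif_neg h] at hx hy
    have hX : Xc e x = Xc e y := hx.trans hy.symm
    have hA : (finProdFinEquiv.symm x).1 = (finProdFinEquiv.symm y).1 :=
      e.symm.injective hX
    exact finProdFinEquiv.symm.injective (Prod.ext hA hxy)

end Card

section Main

variable {r n : ℕ} {K : Type} [Field K] [Fintype K] [DecidableEq K]

lemma invt_walk (e : K ≃ Fin r) (C : Sym2 (Fin (r * n)) → Fin (r + 1))
    (hCcol : ∀ u v, C s(u, v) = colFun e n u v) (i : Fin (r + 1)) {u v : Fin (r * n)}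
    (w : (monochromaticSubgraph (⊤ : SimpleGraph (Fin (r * n))) C i).Walk u v) :
    invt e n i u = invt e n i v := by
  induction w with
  | nil => rfl
  | cons h' p ih => exact (invt_step e (by rw [← hCcol]; exact h'.2)).trans ih

end Main

/-- If `r` is a prime power, `r ∣ n` and `N = rn`, then the edges of `K_N` can be colored
with `r+1` colors so that every monochromatic connected subgraph has at most `n` vertices;
consequently `c(G, P_{n+1}) ≤ r+1` for every graph `G` on `N` vertices. -/
theorem stmt12 (r n : ℕ) (hr : IsPrimePow r) (hdvd : r ∣ n) :
    (∃ C : Sym2 (Fin (r * n)) → Fin (r + 1),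
      ∀ (i : Fin (r + 1)) (v : Fin (r * n)),
        (((monochromaticSubgraph (⊤ : SimpleGraph (Fin (r * n))) C i).connectedComponentMk
            v).supp.ncard) ≤ n) ∧
    ∀ G : SimpleGraph (Fin (r * n)), cNum (r * n) n G ≤ r + 1 := by
  obtain ⟨p, k, hp, hk, hpk⟩ := hr
  haveI : Fact p.Prime := ⟨Nat.prime_iff.mpr hp⟩
  haveI : Fintype (GaloisField p k) := Fintype.ofFinite _
  haveI : DecidableEq (GaloisField p k) := Classical.decEq _
  have hcard : Fintype.card (GaloisField p k) = r := by
    rw [← Nat.card_eq_fintype_card, GaloisField.card p k (by omega)]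
    exact hpk
  let e : GaloisField p k ≃ Fin r := Fintype.equivFinOfCardEq hcard
  obtain ⟨m, hm⟩ := hdvd
  set C : Sym2 (Fin (r * n)) → Fin (r + 1) :=
    Sym2.lift ⟨colFun e n, colFun_symm e n⟩ with hCdef
  have hCcol : ∀ u v : Fin (r * n), C s(u, v) = colFun e n u v := fun u v => rfl
  have hmain : ∀ (i : Fin (r + 1)) (v : Fin (r * n)),
      (((monochromaticSubgraph (⊤ : SimpleGraph (Fin (r * n))) C i).connectedComponentMk
        v).supp.ncard) ≤ n := by
    intro i v
    have hsub : ((monochromaticSubgraph (⊤ : SimpleGraph (Fin (r * n))) C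
        i).connectedComponentMk v).supp ⊆ {x | invt e n i x = invt e n i v} := by
      intro x hx
      rw [ConnectedComponent.mem_supp_iff, ConnectedComponent.eq] at hx
      obtain ⟨w⟩ := hx
      exact invt_walk e C hCcol i w
    exact le_trans (Set.ncard_le_ncard hsub (Set.toFinite _))
      (invt_fiber_card e hm i (invt e n i v))
  refine ⟨⟨C, hmain⟩, ?_⟩
  intro G
  apply Nat.sInf_le
  refine ⟨C, fun i => pathFree_of_small_components ?_⟩
  refine small_components_mono ?_ (hmain i)
  intro a b hab
  exact ⟨hab.1.ne, hab.2⟩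
end
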